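/- Let α ∈ (0,1), β ≥ 0, and k ∈ ℕ. Then the equation √λ·sin(√λ) = -β·sin(√λ·α)·sin(√λ·(1-α)) has exactly one root λ in the interval [π²k², π²(k+1)²). -/

import Mathlib

/-!
With `x = √λ` the equation reads `g x = 0`, where `g x = x sin x + β p x` and
`p x = sin (α x) sin ((1-α) x)`.

Existence: on `[kπ, (k+1)π)` the function `(-1)^k g` starts at `-β sin² (αkπ) ≤ 0` and is positive
just left of `(k+1)π`, where it takes the value `β sin² (α(k+1)π) ≥ 0` and, if that vanishes, has
derivative `-(k+1)π`; apply the intermediate value theorem.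

Uniqueness: where `p ≠ 0`, `g = p (G + β)` with `G x = x cot (αx) + x cot ((1-α)x)` strictly
decreasing. On `[kπ, (k+1)π]` the function `p` has at most one zero: the zeros of each factor are
more than `π` apart, and zeros `x` of the first and `y` of the second factor make `αx + (1-α)y` a
multiple of `π`, hence an endpoint, which forces `x = y`. A root `r` in the open interval has no zero of `p` on `[kπ, r]`, for
otherwise `G` would decrease on `[r, (k+1)π]` from `-β ≤ 0` to `G((k+1)π) = 0`. So between two
roots `G` would be strictly decreasing and equal to `-β` at both ends.
-/

open Real Set Topology

noncomputable section

def sinProd (α x : ℝ) : ℝ := sin (α * x) * sin ((1 - α) * x)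

def secularFun (α β x : ℝ) : ℝ := x * sin x + β * sinProd α x

def xcot (c x : ℝ) : ℝ := x * cos (c * x) / sin (c * x)

def cotSum (α x : ℝ) : ℝ := xcot α x + xcot (1 - α) x

end

theorem hasDerivAt_xcot (c x : ℝ) (hs : sin (c * x) ≠ 0) :
    HasDerivAt (xcot c) ((sin (c * x) * cos (c * x) - c * x) / sin (c * x) ^ 2) x := by
  have hcx : HasDerivAt (fun y => c * y) c x := by simpa using (hasDerivAt_id x).const_mul c
  refine (((hasDerivAt_id x).mul ((hasDerivAt_cos _).comp x hcx)).div
    ((hasDerivAt_sin _).comp x hcx) hs).congr_deriv ?_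
  simp only [id, Function.comp_apply, Pi.mul_apply]
  congr 1
  linear_combination -(c * x) * sin_sq_add_cos_sq (c * x)

theorem strictAntiOn_xcot {c a b : ℝ} (hc : 0 < c) (ha : 0 < a)
    (hs : ∀ x ∈ Icc a b, sin (c * x) ≠ 0) : StrictAntiOn (xcot c) (Icc a b) := by
  refine strictAntiOn_of_deriv_neg (convex_Icc a b)
    (fun x hx => ((hasDerivAt_xcot c x (hs x hx)).continuousAt).continuousWithinAt) ?_
  rw [interior_Icc]
  intro x hx
  have hsx := hs x (Ioo_subset_Icc_self hx)
  rw [(hasDerivAt_xcot c x hsx).deriv]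
  refine div_neg_of_neg_of_pos ?_ (by positivity)
  have h2 : sin (2 * (c * x)) < 2 * (c * x) := sin_lt (mul_pos two_pos (mul_pos hc (ha.trans hx.1)))
  rw [sin_two_mul] at h2
  linarith

theorem strictAntiOn_cotSum {α a b : ℝ} (hα : α ∈ Ioo 0 1) (ha : 0 < a)
    (hs : ∀ x ∈ Icc a b, sinProd α x ≠ 0) : StrictAntiOn (cotSum α) (Icc a b) :=
  fun _ hx _ hy hxy => add_lt_add
    (strictAntiOn_xcot hα.1 ha (fun z hz => left_ne_zero_of_mul (hs z hz)) hx hy hxy)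
    (strictAntiOn_xcot (sub_pos.2 hα.2) ha (fun z hz => right_ne_zero_of_mul (hs z hz)) hx hy hxy)

theorem secularFun_eq_sinProd_mul {α β x : ℝ} (h : sinProd α x ≠ 0) :
    secularFun α β x = sinProd α x * (cotSum α x + β) := by
  have h1 : sin (α * x) ≠ 0 := left_ne_zero_of_mul h
  have h2 : sin ((1 - α) * x) ≠ 0 := right_ne_zero_of_mul h
  have hsin : sin x = sin (α * x) * cos ((1 - α) * x) + cos (α * x) * sin ((1 - α) * x) := by
    rw [← sin_add]; ring_nf
  simp only [secularFun, cotSum, xcot, sinProd, hsin]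
  rw [div_add_div _ _ h1 h2, mul_add _ _ β, mul_div_cancel₀ _ (mul_ne_zero h1 h2)]
  ring

theorem cotSum_eq_neg_of_secularFun_eq_zero {α β x : ℝ} (h : sinProd α x ≠ 0)
    (hx : secularFun α β x = 0) : cotSum α x = -β := by
  rw [secularFun_eq_sinProd_mul h] at hx
  linarith [(mul_eq_zero.1 hx).resolve_left h]

theorem sin_one_sub_mul_nat_mul_pi (α : ℝ) (n : ℕ) :
    sin ((1 - α) * (n * π)) = -((-1) ^ n * sin (α * (n * π))) := by
  rw [show (1 - α) * (n * π) = n * π - α * (n * π) by ring]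
  exact sin_nat_mul_pi_sub _ n

theorem neg_one_pow_mul_secularFun_nat_mul_pi (α β : ℝ) (n : ℕ) :
    (-1) ^ n * secularFun α β (n * π) = -(β * sin (α * (n * π)) ^ 2) := by
  simp only [secularFun, sinProd, sin_nat_mul_pi, sin_one_sub_mul_nat_mul_pi, mul_zero, zero_add]
  linear_combination (-(β * sin (α * (n * π)) ^ 2)) * (even_two_mul n).neg_one_pow (α := ℝ)

theorem neg_one_pow_mul_sin_pos {k : ℕ} {x : ℝ} (hx : x ∈ Ioo (k * π) ((k + 1) * π)) :
    0 < (-1) ^ k * sin x := by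
  rw [← sin_sub_nat_mul_pi]
  exact sin_pos_of_pos_of_lt_pi (by linarith [hx.1]) (by linarith [hx.2])

theorem eq_of_sin_mul_eq_zero {c x y : ℝ} (hc : c ∈ Ioo 0 1) (hxy : |x - y| ≤ π)
    (hcx : sin (c * x) = 0) (hcy : sin (c * y) = 0) : x = y := by
  obtain ⟨m, hm⟩ := sin_eq_zero_iff.1 hcx
  obtain ⟨n, hn⟩ := sin_eq_zero_iff.1 hcy
  have hmn : |((m - n : ℤ) : ℝ)| < 1 := by
    have : |((m - n : ℤ) : ℝ)| * π = c * |x - y| := by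
      rw [← abs_of_pos pi_pos, ← abs_of_pos hc.1, ← abs_mul, ← abs_mul]
      push_cast
      congr 1
      linear_combination hm - hn
    nlinarith [pi_pos, hc.1, hc.2, abs_nonneg (x - y)]
  rw [← Int.cast_abs, ← Int.cast_one, Int.cast_lt, Int.abs_lt_one_iff, sub_eq_zero] at hmn
  subst hmn
  exact mul_left_cancel₀ hc.1.ne' (hm.symm.trans hn)

theorem eq_of_sin_mul_eq_zero_of_sin_one_sub_mul_eq_zero {α x y : ℝ} {k : ℤ} (hα : α ∈ Ioo 0 1)
    (hx : x ∈ Icc (k * π) ((k + 1) * π)) (hy : y ∈ Icc (k * π) ((k + 1) * π))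
    (hαx : sin (α * x) = 0) (hαy : sin ((1 - α) * y) = 0) : x = y := by
  obtain ⟨m, hm⟩ := sin_eq_zero_iff.1 hαx
  obtain ⟨n, hn⟩ := sin_eq_zero_iff.1 hαy
  have hsum : (m + n : ℝ) * π = α * x + (1 - α) * y := by linear_combination hm + hn
  have h1 : (k : ℝ) ≤ m + n := by nlinarith [pi_pos, hα.1, hα.2, hx.1, hy.1]
  have h2 : (m + n : ℝ) ≤ k + 1 := by nlinarith [pi_pos, hα.1, hα.2, hx.2, hy.2]
  have h1' : k ≤ m + n := by exact_mod_cast h1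
  have h2' : m + n ≤ k + 1 := by exact_mod_cast h2
  obtain hk | hk : m + n = k ∨ m + n = k + 1 := by omega
  · have hk' : (m + n : ℝ) = k := by exact_mod_cast hk
    rw [hk'] at hsum
    have : x ≤ k * π := by nlinarith [hα.1, hα.2, hx.1, hy.1]
    have : y ≤ k * π := by nlinarith [hα.1, hα.2, hx.1, hy.1]
    linarith [hx.1, hy.1]
  · have hk' : (m + n : ℝ) = k + 1 := by exact_mod_cast hk
    rw [hk'] at hsum
    have : (k + 1) * π ≤ x := by nlinarith [hα.1, hα.2, hx.2, hy.2]
    have : (k + 1) * π ≤ y := by nlinarith [hα.1, hα.2, hx.2, hy.2]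
    linarith [hx.2, hy.2]

theorem sinProd_zeros_subsingleton {α : ℝ} {k : ℤ} (hα : α ∈ Ioo 0 1) :
    {x ∈ Icc (k * π) ((k + 1) * π) | sinProd α x = 0}.Subsingleton := by
  have hα' : 1 - α ∈ Ioo 0 1 := ⟨sub_pos.2 hα.2, sub_lt_self 1 hα.1⟩
  rintro x ⟨hx, hx0⟩ y ⟨hy, hy0⟩
  have hxy : |x - y| ≤ π := abs_sub_le_iff.2 ⟨by linarith [hx.2, hy.1], by linarith [hx.1, hy.2]⟩
  rcases mul_eq_zero.1 hx0 with hx0 | hx0 <;> rcases mul_eq_zero.1 hy0 with hy0 | hy0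
  · exact eq_of_sin_mul_eq_zero hα hxy hx0 hy0
  · exact eq_of_sin_mul_eq_zero_of_sin_one_sub_mul_eq_zero hα hx hy hx0 hy0
  · exact (eq_of_sin_mul_eq_zero_of_sin_one_sub_mul_eq_zero hα hy hx hy0 hx0).symm
  · exact eq_of_sin_mul_eq_zero hα' hxy hx0 hy0

theorem continuous_secularFun (α β : ℝ) : Continuous (secularFun α β) := by
  unfold secularFun sinProd
  fun_prop

theorem hasDerivAt_secularFun (α β x : ℝ) :
    HasDerivAt (secularFun α β) (sin x + x * cos x +
      β * (α * cos (α * x) * sin ((1 - α) * x) + (1 - α) * sin (α * x) * cos ((1 - α) * x))) x := by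
  have hlin (c : ℝ) : HasDerivAt (fun y => c * y) c x := by
    simpa using (hasDerivAt_id x).const_mul c
  refine (((hasDerivAt_id x).mul (hasDerivAt_sin x)).add
    ((((hasDerivAt_sin _).comp x (hlin α)).mul
      ((hasDerivAt_sin _).comp x (hlin (1 - α)))).const_mul β)).congr_deriv ?_
  simp only [id, Function.comp_apply]
  ring

theorem sin_nat_add_one_mul_pi (k : ℕ) : sin ((k + 1) * π) = 0 := by
  exact_mod_cast sin_nat_mul_pi (k + 1)

section Roots

variable {α β : ℝ}

theorem sinProd_ne_zero_of_secularFun_eq_zero {k : ℕ} {x : ℝ} (hx : x ∈ Ioo (k * π) ((k + 1) * π))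
    (hg : secularFun α β x = 0) : sinProd α x ≠ 0 := by
  intro hp
  have hsin := neg_one_pow_mul_sin_pos hx
  have hxpos : 0 < x := lt_of_le_of_lt (by positivity) hx.1
  simp only [secularFun, hp, mul_zero, add_zero] at hg
  rcases mul_eq_zero.1 hg with h | h
  · exact hxpos.ne' h
  · simp [h] at hsin

theorem sinProd_ne_zero_of_le_root (hα : α ∈ Ioo 0 1) (hβ : 0 ≤ β) {k : ℕ} {r : ℝ}
    (hr : r ∈ Ioo (k * π) ((k + 1) * π)) (hg : secularFun α β r = 0) :
    ∀ z ∈ Icc (k * π) r, sinProd α z ≠ 0 := by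
  intro z hz hz0
  have hzr : z < r := hz.2.lt_of_ne fun h => sinProd_ne_zero_of_secularFun_eq_zero hr hg (h ▸ hz0)
  have hne : ∀ w ∈ Icc r ((k + 1) * π), sinProd α w ≠ 0 := fun w hw hw0 =>
    (hzr.trans_le hw.1).ne <| sinProd_zeros_subsingleton (k := k) hα
      ⟨by push_cast; exact ⟨hz.1, hz.2.trans hr.2.le⟩, hz0⟩
      ⟨by push_cast; exact ⟨hr.1.le.trans hw.1, hw.2⟩, hw0⟩
  have hrpos : 0 < r := lt_of_le_of_lt (by positivity) hr.1
  have hcot_b : cotSum α ((k + 1) * π) = -0 :=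
    cotSum_eq_neg_of_secularFun_eq_zero (hne _ ⟨hr.2.le, le_rfl⟩)
      (by simp [secularFun, sin_nat_add_one_mul_pi])
  have hcot_r : cotSum α r = -β := cotSum_eq_neg_of_secularFun_eq_zero (hne r ⟨le_rfl, hr.2.le⟩) hg
  have := strictAntiOn_cotSum hα hrpos hne ⟨le_rfl, hr.2.le⟩ ⟨hr.2.le, le_rfl⟩ hr.2
  linarith

theorem eq_of_secularFun_eq_zero (hα : α ∈ Ioo 0 1) (hβ : 0 ≤ β) {k : ℕ} {x y : ℝ}
    (hx : x ∈ Ico (k * π) ((k + 1) * π)) (hy : y ∈ Ico (k * π) ((k + 1) * π))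
    (hgx : secularFun α β x = 0) (hgy : secularFun α β y = 0) : x = y := by
  wlog hxy : x < y generalizing x y
  · exact (not_lt.1 hxy).lt_or_eq.elim (fun h => (this hy hx hgy hgx h).symm) Eq.symm
  have hne := sinProd_ne_zero_of_le_root hα hβ ⟨hx.1.trans_lt hxy, hy.2⟩ hgy
  have hxpos : 0 < x := (hx.1.trans' (by positivity)).lt_of_ne
    fun h => hne x ⟨hx.1, hxy.le⟩ (by simp [← h, sinProd])
  have hanti := strictAntiOn_cotSum hα hxpos (fun z hz => hne z ⟨hx.1.trans hz.1, hz.2⟩)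
    ⟨le_rfl, hxy.le⟩ ⟨hxy.le, le_rfl⟩ hxy
  rw [cotSum_eq_neg_of_secularFun_eq_zero (hne x ⟨hx.1, hxy.le⟩) hgx,
    cotSum_eq_neg_of_secularFun_eq_zero (hne y ⟨hx.1.trans hxy.le, le_rfl⟩) hgy] at hanti
  exact absurd hanti (lt_irrefl _)

theorem eventually_neg_one_pow_mul_secularFun_pos (hβ : 0 ≤ β) (k : ℕ) :
    ∀ᶠ x in 𝓝[<] ((k + 1) * π), 0 < (-1) ^ k * secularFun α β x := by
  set b : ℝ := (k + 1) * π
  set f : ℝ → ℝ := fun x => (-1) ^ k * secularFun α β x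
  have hf : Continuous f := continuous_const.mul (continuous_secularFun α β)
  have hfb : f b = β * sin (α * b) ^ 2 := by
    have := neg_one_pow_mul_secularFun_nat_mul_pi α β (k + 1)
    push_cast [pow_succ] at this
    linear_combination -this
  rcases (show 0 ≤ f b by rw [hfb]; positivity).lt_or_eq with hpos | hzero
  · exact eventually_nhdsWithin_of_eventually_nhds (hf.continuousAt.eventually (lt_mem_nhds hpos))
  have hβ1 : β * sin (α * b) = 0 := by
    rw [hfb, eq_comm, mul_eq_zero, pow_eq_zero_iff two_ne_zero] at hzero
    rw [mul_eq_zero]; exact hzero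
  have hβ2 : β * sin ((1 - α) * b) = 0 := by
    have := sin_one_sub_mul_nat_mul_pi α (k + 1)
    push_cast at this
    rw [this]
    linear_combination -((-1) ^ (k + 1)) * hβ1
  have hderiv : deriv f b = -b := by
    rw [((hasDerivAt_secularFun α β b).const_mul ((-1) ^ k)).deriv]
    have hcos : cos b = (-1) ^ (k + 1) := by
      have := cos_nat_mul_pi (k + 1)
      push_cast at this
      exact this
    rw [sin_nat_add_one_mul_pi, hcos]
    linear_combination (-1 : ℝ) ^ k * (α * cos (α * b) * hβ2 + (1 - α) * cos ((1 - α) * b) * hβ1)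
      - b * (even_two_mul k).neg_one_pow (α := ℝ)
  have hsign := eventually_nhdsWithin_sign_eq_of_deriv_neg
    (hderiv.trans_lt (neg_neg_of_pos (by positivity))) hzero.symm
  filter_upwards [eventually_nhdsWithin_of_eventually_nhds hsign, self_mem_nhdsWithin]
    with x hx hxb
  rw [← sign_eq_one_iff]
  exact hx.trans (sign_pos (sub_pos.2 hxb))

theorem exists_secularFun_eq_zero (hβ : 0 ≤ β) (k : ℕ) :
    ∃ x ∈ Ico (k * π) ((k + 1) * π), secularFun α β x = 0 := by
  have hab : (k : ℝ) * π < (k + 1) * π := by nlinarith [pi_pos]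
  obtain ⟨c, hc, ⟨hc1, hc2⟩⟩ :=
    ((eventually_neg_one_pow_mul_secularFun_pos (α := α) hβ k).and (Ioo_mem_nhdsLT hab)).exists
  have ha : (-1) ^ k * secularFun α β (k * π) ≤ 0 := by
    rw [neg_one_pow_mul_secularFun_nat_mul_pi, neg_nonpos]
    positivity
  obtain ⟨x, hx, hfx⟩ := intermediate_value_Icc hc1.le
    (continuous_const.mul (continuous_secularFun α β)).continuousOn ⟨ha, hc.le⟩
  exact ⟨x, ⟨hx.1, hx.2.trans_lt hc2⟩,
    (mul_eq_zero.1 hfx).resolve_left (pow_ne_zero _ (by norm_num))⟩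

end Roots

theorem existsUnique_sq_mem_Ico_of_existsUnique {P : ℝ → Prop} {a b : ℝ} (ha : 0 ≤ a)
    (h : ∃! x, x ∈ Ico a b ∧ P x) : ∃! lam, lam ∈ Ico (a ^ 2) (b ^ 2) ∧ P (√lam) := by
  obtain ⟨x, ⟨hx, hPx⟩, huniq⟩ := h
  have hx0 : 0 ≤ x := ha.trans hx.1
  refine ⟨x ^ 2, ⟨⟨pow_le_pow_left₀ ha hx.1 2, pow_lt_pow_left₀ hx.2 hx0 two_ne_zero⟩,
    by rwa [sqrt_sq hx0]⟩, ?_⟩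
  rintro lam ⟨hlam, hP⟩
  have hlam0 : 0 ≤ lam := (sq_nonneg a).trans hlam.1
  have hmem : √lam ∈ Ico a b :=
    ⟨(le_sqrt ha hlam0).2 hlam.1, (sqrt_lt' (hx0.trans_lt hx.2)).2 hlam.2⟩
  rw [← sq_sqrt hlam0, huniq _ ⟨hmem, hP⟩]

theorem secularFun_eq_zero_iff {α β x : ℝ} :
    secularFun α β x = 0 ↔ x * sin x = -β * sin (x * α) * sin (x * (1 - α)) := by
  rw [secularFun, sinProd, mul_comm α, mul_comm (1 - α), add_eq_zero_iff_eq_neg]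
  ring_nf

theorem basic_problem_unique_eigenvalue_general
    (α β : ℝ) (hα : α ∈ Set.Ioo (0:ℝ) 1) (hβ : 0 ≤ β) (k : ℕ) :
    ∃! lam : ℝ,
      lam ∈ Set.Ico (Real.pi^2 * k^2) (Real.pi^2 * (k + 1)^2) ∧
      Real.sqrt lam * Real.sin (Real.sqrt lam) =
        -β * Real.sin (Real.sqrt lam * α) * Real.sin (Real.sqrt lam * (1 - α)) := by
  obtain ⟨x, hx, hgx⟩ := exists_secularFun_eq_zero (α := α) hβ k
  have hroot : ∃! x, x ∈ Ico (k * π) ((k + 1) * π) ∧ secularFun α β x = 0 :=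
    ⟨x, ⟨hx, hgx⟩, fun y ⟨hy, hgy⟩ => eq_of_secularFun_eq_zero hα hβ hy hx hgy hgx⟩
  simp only [secularFun_eq_zero_iff] at hroot
  rw [show π ^ 2 * k ^ 2 = (k * π) ^ 2 by ring,
    show π ^ 2 * (k + 1) ^ 2 = ((k + 1) * π) ^ 2 by ring]
  exact existsUnique_sq_mem_Ico_of_existsUnique (by positivity) hroot

theorem basic_problem_unique_eigenvalue
    (α β : ℝ) (hα : α ∈ Set.Ioo (0:ℝ) 1) (hβ : 0 ≤ β) (k : ℕ) (hk : 1 ≤ k) :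
    ∃! lam : ℝ,
      lam ∈ Set.Ico (Real.pi^2 * k^2) (Real.pi^2 * (k + 1)^2) ∧
      Real.sqrt lam * Real.sin (Real.sqrt lam) =
        -β * Real.sin (Real.sqrt lam * α) * Real.sin (Real.sqrt lam * (1 - α)) :=
  basic_problem_unique_eigenvalue_general α β hα hβ k
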